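/- For every positive integer n, the following identity of linear operators on ℝ[x] holds: δ∘(δ − 1·2·I)∘(δ − 2·3·I)∘⋯∘(δ − (n−1)·n·I) = L_0∘L_1∘⋯∘L_{n−1}∘Dⁿ, where I is the identity operator, D = d/dx, and for each k the operator L_k is given by L_k[q] = (x²−1)·q′ + 2(k+1)·x·q. -/
import Mathlib


open Polynomial Finset

/-- The Legendre differential operator `δ[q] = (x²−1)q″ + 2xq′` as a linear endomorphism. -/
noncomputable def legendreDelta : Module.End ℝ (Polynomial ℝ) :=
  (LinearMap.mulLeft ℝ ((X : Polynomial ℝ) ^ 2 - 1)).comp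
      (Polynomial.derivative.comp Polynomial.derivative) +
    (LinearMap.mulLeft ℝ (2 * X : Polynomial ℝ)).comp Polynomial.derivative

/-- The operator `L_k[q] = (x²−1)q′ + 2(k+1)x·q`. -/
noncomputable def Lop (k : ℕ) : Module.End ℝ (Polynomial ℝ) :=
  (LinearMap.mulLeft ℝ ((X : Polynomial ℝ) ^ 2 - 1)).comp Polynomial.derivative +
    LinearMap.mulLeft ℝ (Polynomial.C (2 * ((k : ℝ) + 1)) * X)

/-- Commutation relation: `D ∘ L_n = L_{n+1} ∘ D + 2(n+1)·I`. -/
lemma D_comm_Lop (n : ℕ) :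
    (Polynomial.derivative : Module.End ℝ (Polynomial ℝ)) * Lop n =
      Lop (n + 1) * Polynomial.derivative +
        (2 * ((n : ℝ) + 1)) • (1 : Module.End ℝ (Polynomial ℝ)) := by
  refine LinearMap.ext fun q => ?_
  simp only [Lop, Module.End.mul_apply, LinearMap.add_apply, LinearMap.comp_apply,
    LinearMap.mulLeft_apply, LinearMap.smul_apply, Module.End.one_apply, derivative_mul,
    derivative_sub, derivative_pow, derivative_X, derivative_one, derivative_C, Nat.cast_add,
    Nat.cast_one, smul_eq_C_mul, C_add, C_mul, map_natCast, map_ofNat, C_1]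
  simp only [derivative_add, derivative_sub, derivative_mul, derivative_X, derivative_pow,
    derivative_natCast, derivative_ofNat, derivative_one, map_ofNat, Nat.cast_ofNat]
  push_cast
  ring

/-- Key identity: `Dⁿ ∘ δ = L_n ∘ Dⁿ⁺¹ + n(n+1)·Dⁿ`. -/
lemma key (n : ℕ) :
    (Polynomial.derivative : Module.End ℝ (Polynomial ℝ)) ^ n * legendreDelta =
      Lop n * (Polynomial.derivative : Module.End ℝ (Polynomial ℝ)) ^ (n + 1) +
        ((n : ℝ) * (n + 1)) • (Polynomial.derivative : Module.End ℝ (Polynomial ℝ)) ^ n := by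
  induction n with
  | zero =>
    simp only [pow_zero, one_mul, Nat.cast_zero, zero_mul, zero_smul, add_zero, pow_one]
    refine LinearMap.ext fun q => ?_
    simp only [legendreDelta, Lop, Module.End.mul_apply, LinearMap.add_apply,
      LinearMap.comp_apply, LinearMap.mulLeft_apply, Nat.cast_zero, C_add, C_mul, map_ofNat,
      C_1, C_0, map_zero]
    ring
  | succ n ih =>
    have h1 : (Polynomial.derivative : Module.End ℝ (Polynomial ℝ)) ^ (n + 1) * legendreDelta =
        Polynomial.derivative *
          ((Polynomial.derivative : Module.End ℝ (Polynomial ℝ)) ^ n * legendreDelta) := by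
      rw [pow_succ', mul_assoc]
    rw [h1, ih, mul_add, ← mul_assoc, D_comm_Lop, add_mul, smul_mul_assoc, one_mul,
      mul_smul_comm, ← pow_succ', mul_assoc, ← pow_succ', add_assoc, ← add_smul]
    congr 2
    push_cast
    ring

theorem stmt14 (n : ℕ) (hn : 0 < n) :
    ((List.range n).map
        (fun k => legendreDelta - ((k : ℝ) * (k + 1)) • (1 : Module.End ℝ (Polynomial ℝ)))).prod =
      ((List.range n).map Lop).prod *
        (Polynomial.derivative : Module.End ℝ (Polynomial ℝ)) ^ n := by
  clear hn
  induction n with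
  | zero => simp
  | succ n ih =>
    rw [List.range_succ] at *
    simp only [List.pure_def, List.bind_eq_flatMap, List.flatMap_append, List.flatMap_cons,
      List.flatMap_nil, List.map_append, List.prod_append, List.map_cons, List.map_nil,
      List.prod_cons, List.prod_nil, mul_one, List.append_nil, List.map_singleton,
      List.prod_singleton] at *
    rw [ih, mul_assoc, mul_assoc]
    congr 1
    rw [mul_sub, key n, mul_smul_comm, mul_one, add_sub_cancel_right]
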